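/- Suppose each P*†_s (for s ∈ S) satisfies P*†_s(X_0 = s) = 1 with Z_0 uniform on R_s under P*†_s (i.e., P*†_s(X_0 = s, Z_0 ∈ R') = |R' ∩ R_s|/|R_s| for Borel R' ⊆ [0,1]), P*†_s(𝒯 < ∞) = 1, E*†_s(𝒯) < ∞, and regenerates at 𝒯 with restart laws (P*†_s : s ∈ S). Let π† = (π†_s : s ∈ S) be strictly positive with ∑_{s∈S} π†_s · E*†_s(𝒯) = 1, and define the probability measure ℙ*† on K^ℕ by ℙ*†(B) = ∑_{s∈S} π†_s ∑_{n≥0} P*†_s({𝒯 > n} ∩ Θ_n^{-1}B). Then ℙ*† is stationary (invariant under the shift Θ_1) if and only if π† is invariant for the stochastic matrix Q† = (q†_{s s'}) with q†_{s s'} = P*†_s(X_𝒯 = s'), that is, π†_s = ∑_{s'∈S} π†_{s'} q†_{s' s} for every s ∈ S. -/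

import Mathlib

open MeasureTheory Filter
open scoped ENNReal NNReal ENat

variable {I : Type*} [MeasurableSpace I]

/-- The shift map `Θ_q` on `K^ℕ` where `K = I × ℝ`. -/
def shiftK (q : ℕ) (w : ℕ → I × ℝ) : ℕ → I × ℝ := fun n => w (n + q)

/-- The hitting time of a different class in the random model:
`𝒯(w) = inf {n > 0 : 𝒳_n(w) ∈ V \ 𝒞(𝒳_0(w))}` (with `inf ∅ = ∞`), where
`V = ⋃_{s ∈ S} {s} × R_s` and `𝒞(s, r) = ⋃_{s' ∈ C(s)} {s'} × R_{s'}`. -/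
noncomputable def hitTK (S : Finset I) (sim : I → I → Prop) (Rs : I → Set ℝ)
    (w : ℕ → I × ℝ) : ℕ∞ :=
  sInf ((fun n : ℕ => (n : ℕ∞)) ''
    {n : ℕ | 0 < n ∧ (w n).1 ∈ S ∧ (w n).2 ∈ Rs ((w n).1) ∧ ¬ sim ((w 0).1) ((w n).1)})

/-- The expectation `E(𝒯)` of the hitting time `𝒯` under `P`. -/
noncomputable def hitETK (S : Finset I) (sim : I → I → Prop) (Rs : I → Set ℝ)
    (P : Measure (ℕ → I × ℝ)) : ℝ≥0∞ :=
  ∫⁻ w, (hitTK S sim Rs w : ℝ≥0∞) ∂P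

/-- The measure `ℙ†(B) = ∑_{s ∈ S} π†_s ∑_{n ≥ 0} P†_s({𝒯 > n} ∩ Θ_n⁻¹ B)` on `K^ℕ`. -/
noncomputable def lawPK (S : Finset I) (sim : I → I → Prop) (Rs : I → Set ℝ) (π : I → ℝ≥0)
    (Pd : I → Measure (ℕ → I × ℝ)) : Measure (ℕ → I × ℝ) :=
  ∑ s ∈ S, π s •
    Measure.sum
      (fun n : ℕ => ((Pd s).restrict {w | (n : ℕ∞) < hitTK S sim Rs w}).map (shiftK n))

/-- The iterated hitting times of different classes in the random model:
`𝒯^0 = 0`, `𝒯^1 = 𝒯` and `𝒯^{n+1} = 𝒯^n + 𝒯 ∘ Θ_{𝒯^n}`. -/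
noncomputable def hitTKn (S : Finset I) (sim : I → I → Prop) (Rs : I → Set ℝ) :
    ℕ → (ℕ → I × ℝ) → ℕ∞
  | 0, _ => 0
  | n + 1, w =>
    let t := hitTKn S sim Rs n w
    if t = ⊤ then (⊤ : ℕ∞) else t + hitTK S sim Rs (shiftK t.toNat w)

/-- The σ-field `B_n = σ(𝒳_0, …, 𝒳_n)` generated by the first `n + 1` coordinates. -/
def coordSAK (I : Type*) [MeasurableSpace I] (n : ℕ) : MeasurableSpace (ℕ → I × ℝ) :=
  ⨆ k ≤ n, MeasurableSpace.comap (fun w : ℕ → I × ℝ => w k) inferInstance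

/-- The collection of events in the σ-field `B_{T'}` of the stopping time `T'`. -/
def stopSetsK (T' : (ℕ → I × ℝ) → ℕ∞) : Set (Set (ℕ → I × ℝ)) :=
  {B | MeasurableSet B ∧ ∀ n : ℕ, MeasurableSet[coordSAK I n] (B ∩ {w | T' w ≤ (n : ℕ∞)})}

/-- `P` regenerates at the stopping time `T'` with restart laws `(Ps s : s ∈ S)`:
`X_{T'} ∈ S` a.s. on `{T' < ∞}`, and for every bounded measurable `h`,
`E[1_{T' < ∞} · h ∘ Θ_{T'} ∣ B_{T'}] = 1_{T' < ∞} · E_{X_{T'}}(h)` `P`-a.s., expressed by the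
defining integral identity over all events of `B_{T'}`. -/
def RegenK (S : Finset I) (T' : (ℕ → I × ℝ) → ℕ∞) (Ps : I → Measure (ℕ → I × ℝ))
    (P : Measure (ℕ → I × ℝ)) : Prop :=
  P ({w | T' w < ⊤} ∩ {w | (w (T' w).toNat).1 ∉ (S : Set I)}) = 0 ∧
  ∀ h : (ℕ → I × ℝ) → ℝ, Measurable h → (∃ M, ∀ y, |h y| ≤ M) →
    ∀ B ∈ stopSetsK T',
      ∫ w in B ∩ {w | T' w < ⊤}, h (shiftK (T' w).toNat w) ∂P =
      ∫ w in B ∩ {w | T' w < ⊤}, (∫ y, h y ∂ Ps ((w (T' w).toNat).1)) ∂P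

/-- The transition matrix entries `q†_{s s'} = P*†_s(X_𝒯 = s')`. -/
noncomputable def qmatK (S : Finset I) (sim : I → I → Prop) (Rs : I → Set ℝ)
    (Ps : I → Measure (ℕ → I × ℝ)) (s s' : I) : ℝ≥0∞ :=
  Ps s {w | hitTK S sim Rs w < ⊤ ∧ (w (hitTK S sim Rs w).toNat).1 = s'}

/-
`ℙ†` is the `π†`-mixture of the cycle measures `C_s(B) = E_s ∑_{n < 𝒯} 1_B(Θ_n w)`. Shifting a
cycle by one step loses its point at time `0` and gains the point at time `𝒯`, so
`C_s ∘ Θ_1⁻¹ + P_s = C_s + P_s(𝒯 < ∞, Θ_𝒯 ∈ ·)`, and regeneration at `𝒯` turns the last term into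
`∑_{s'} q_{s s'} P_{s'}`. As `ℙ†` is finite, it is therefore stationary iff
`∑_s π_s P_s = ∑_{s'} (π Q)_{s'} P_{s'}`; the laws `P_s` are carried by the disjoint events
`{X_0 = s}`, so this holds iff `π = π Q` on `S`.
-/

theorem ENat.measurable_of_measurableSet_le {α : Type*} [MeasurableSpace α] {f : α → ℕ∞}
    (hf : ∀ n : ℕ, MeasurableSet {x | f x ≤ n}) : Measurable f := by
  refine ENat.measurable_iff.2 fun n => ?_
  cases n with
  | zero =>
    convert hf 0 using 1
    ext x
    simp
  | succ n =>
    convert (hf (n + 1)).diff (hf n) using 1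
    ext x
    simp only [Set.mem_preimage, Set.mem_singleton_iff, Set.mem_sdiff, Set.mem_ofPred_eq, not_le]
    rw [← ENat.add_one_le_iff (ENat.natCast_ne_top n)]
    push_cast
    exact ⟨fun h => ⟨h.le, h.ge⟩, fun h => le_antisymm h.1 h.2⟩

theorem ENat.tsum_ite_lt (t : ℕ∞) :
    ∑' n : ℕ, (if (n : ℕ∞) < t then 1 else 0 : ℝ≥0∞) = t := by
  induction t using ENat.recTopCoe with
  | top => simp
  | coe k =>
    rw [tsum_eq_sum (s := Finset.range k) fun n hn => by simp_all,
      Finset.sum_congr rfl fun n hn => if_pos (by simpa using hn)]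
    simp

namespace MeasureTheory

variable {α : Type*} [MeasurableSpace α]

theorem measure_natCast_lt_inter_eq_add (μ : Measure α) {f : α → ℕ∞} (hf : Measurable f)
    {A : Set α} (hA : MeasurableSet A) (n : ℕ) :
    μ ({x | (n : ℕ∞) < f x} ∩ A) =
      μ ({x | ((n + 1 : ℕ) : ℕ∞) < f x} ∩ A) + μ ({x | f x = ((n + 1 : ℕ) : ℕ∞)} ∩ A) := by
  have hunion : {x | (n : ℕ∞) < f x} ∩ A =
      ({x | ((n + 1 : ℕ) : ℕ∞) < f x} ∩ A) ∪ ({x | f x = ((n + 1 : ℕ) : ℕ∞)} ∩ A) := by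
    rw [← Set.union_inter_distrib_right]
    congr 1
    ext x
    simp only [Set.mem_ofPred_eq, Set.mem_union]
    rw [← ENat.add_one_le_iff (ENat.natCast_ne_top n), le_iff_lt_or_eq, eq_comm]
    push_cast
    rfl
  rw [hunion]
  exact measure_union (Set.disjoint_left.2 fun x h1 h2 => h1.1.ne h2.1.symm)
    ((hf (measurableSet_singleton _)).inter hA)

namespace Measure

theorem map_eq_self_iff_of_add_eq {f : α → α} {μ ν ν' : Measure α} [IsFiniteMeasure μ]
    [IsFiniteMeasure ν] (h : μ.map f + ν = μ + ν') : μ.map f = μ ↔ ν = ν' := by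
  constructor
  · intro hf
    rw [hf] at h
    exact (add_right_inj μ ν ν').1 h
  · rintro rfl
    exact (add_left_inj ν _ _).1 h

theorem isFiniteMeasure_finsetSum_smul {ι : Type*} {S : Finset ι} {μ : ι → Measure α}
    (hμ : ∀ i ∈ S, IsFiniteMeasure (μ i)) (c : ι → ℝ≥0) :
    IsFiniteMeasure (∑ i ∈ S, (c i : ℝ≥0∞) • μ i) := by
  refine ⟨?_⟩
  simp only [finsetSum_apply, smul_apply, smul_eq_mul]
  exact ENNReal.sum_lt_top.2 fun i hi =>
    ENNReal.mul_lt_top ENNReal.coe_lt_top (have := hμ i hi; measure_lt_top _ _)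

theorem finsetSum_smul_eq_finsetSum_smul_iff {ι : Type*} {S : Finset ι} {μ : ι → Measure α}
    {A : ι → Set α} (hself : ∀ i ∈ S, μ i (A i) = 1) (hne : ∀ i ∈ S, ∀ j ∈ S, i ≠ j → μ i (A j) = 0)
    {a b : ι → ℝ≥0∞} :
    ∑ i ∈ S, a i • μ i = ∑ i ∈ S, b i • μ i ↔ ∀ i ∈ S, a i = b i := by
  refine ⟨fun h j hj => ?_, fun h => Finset.sum_congr rfl fun i hi => by rw [h i hi]⟩
  have heval : ∀ c : ι → ℝ≥0∞, (∑ i ∈ S, c i • μ i) (A j) = c j := fun c => by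
    rw [finsetSum_apply, Finset.sum_eq_single_of_mem j hj fun i hi hij => by
      simp [hne i hi j hj hij]]
    simp [hself j hj]
  rw [← heval a, ← heval b, h]

end Measure

end MeasureTheory

section HittingTime

variable (S : Finset I) (sim : I → I → Prop) (Rs : I → Set ℝ)

def hitSetK (n : ℕ) : Set (ℕ → I × ℝ) :=
  {w | 0 < n ∧ (w n).1 ∈ S ∧ (w n).2 ∈ Rs ((w n).1) ∧ ¬ sim ((w 0).1) ((w n).1)}

variable {S sim Rs}

omit [MeasurableSpace I]

theorem exists_hitTK_eq_of_ne_top {w : ℕ → I × ℝ} (h : hitTK S sim Rs w ≠ ⊤) :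
    ∃ n : ℕ, hitTK S sim Rs w = n ∧ w ∈ hitSetK S sim Rs n := by
  have hne : ((fun n : ℕ => (n : ℕ∞)) '' {n | w ∈ hitSetK S sim Rs n}).Nonempty := by
    refine Set.nonempty_iff_ne_empty.2 fun hempty => h ?_
    rw [hitTK]
    exact hempty ▸ sInf_empty
  obtain ⟨n, hn, hT⟩ := csInf_mem hne
  exact ⟨n, hT.symm, hn⟩

theorem hitTK_le_iff {w : ℕ → I × ℝ} {n : ℕ} :
    hitTK S sim Rs w ≤ n ↔ ∃ m ≤ n, w ∈ hitSetK S sim Rs m := by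
  constructor
  · intro h
    obtain ⟨m, hT, hm⟩ := exists_hitTK_eq_of_ne_top (ne_top_of_le_ne_top (ENat.natCast_ne_top n) h)
    exact ⟨m, by exact_mod_cast hT ▸ h, hm⟩
  · rintro ⟨m, hmn, hm⟩
    exact (sInf_le (Set.mem_image_of_mem (fun k : ℕ => (k : ℕ∞)) hm)).trans (Nat.cast_le.2 hmn)

theorem lt_hitTK_iff {w : ℕ → I × ℝ} {n : ℕ} :
    n < hitTK S sim Rs w ↔ ∀ m ≤ n, w ∉ hitSetK S sim Rs m := by
  rw [← not_le, hitTK_le_iff]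
  simp only [not_exists, not_and]

theorem hitTK_pos (w : ℕ → I × ℝ) : 0 < hitTK S sim Rs w := by
  exact_mod_cast lt_hitTK_iff.2 fun m hm hw => (hw.1.trans_le hm).false

theorem exitState_mem_of_hitTK_lt_top {w : ℕ → I × ℝ} (h : hitTK S sim Rs w < ⊤) :
    (w (hitTK S sim Rs w).toNat).1 ∈ S := by
  obtain ⟨n, hT, hn⟩ := exists_hitTK_eq_of_ne_top h.ne
  rw [hT, ENat.toNat_natCast]
  exact hn.2.1

theorem shiftK_zero : (shiftK 0 : (ℕ → I × ℝ) → ℕ → I × ℝ) = id :=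
  rfl

theorem shiftK_shiftK (m n : ℕ) (w : ℕ → I × ℝ) : shiftK m (shiftK n w) = shiftK (n + m) w := by
  funext k
  simp only [shiftK]
  congr 1
  omega

end HittingTime

section Measurability

variable {S : Finset I} {sim : I → I → Prop} {Rs : I → Set ℝ}

theorem measurable_shiftK (n : ℕ) : Measurable (shiftK n : (ℕ → I × ℝ) → ℕ → I × ℝ) :=
  measurable_pi_lambda _ fun k => measurable_pi_apply (k + n)

theorem measurableSet_hitSetK [Countable I] [MeasurableSingletonClass I]
    {m : MeasurableSpace (ℕ → I × ℝ)} (hRmeas : ∀ s ∈ S, MeasurableSet (Rs s)) {n : ℕ}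
    (h0 : Measurable[m] fun w => w 0) (hn : Measurable[m] fun w => w n) :
    MeasurableSet[m] (hitSetK S sim Rs n) := by
  have hV : MeasurableSet {x : I × ℝ | x.1 ∈ S ∧ x.2 ∈ Rs x.1} := by
    convert Finset.measurableSet_biUnion S fun s hs =>
      (measurableSet_singleton s).prod (hRmeas s hs)
    ext x
    simp
  have hpair : Measurable[m] fun w => ((w 0).1, (w n).1) :=
    (measurable_fst.comp h0).prodMk (measurable_fst.comp hn)
  convert ((MeasurableSet.const (0 < n)).inter (hn hV)).inter
    (hpair (MeasurableSet.of_discrete (s := {p : I × I | ¬ sim p.1 p.2}))) using 1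
  ext w
  simp [hitSetK, and_assoc]

variable [Countable I] [MeasurableSingletonClass I]

theorem measurableSet_coordSAK_hitTK_le (hRmeas : ∀ s ∈ S, MeasurableSet (Rs s)) (n : ℕ) :
    MeasurableSet[coordSAK I n] {w | hitTK S sim Rs w ≤ n} := by
  have hcoord : ∀ k ≤ n, Measurable[coordSAK I n] fun w : ℕ → I × ℝ => w k := fun k hk =>
    measurable_iff_comap_le.2 (le_iSup₂_of_le k hk le_rfl)
  have hunion : {w | hitTK S sim Rs w ≤ n} = ⋃ m ∈ Set.Iic n, hitSetK S sim Rs m := by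
    ext w
    simp [hitTK_le_iff]
  rw [hunion]
  exact MeasurableSet.biUnion (Set.to_countable _) fun m hm =>
    measurableSet_hitSetK hRmeas (hcoord 0 n.zero_le) (hcoord m hm)

theorem univ_mem_stopSetsK (hRmeas : ∀ s ∈ S, MeasurableSet (Rs s)) :
    Set.univ ∈ stopSetsK (hitTK S sim Rs) := by
  refine ⟨MeasurableSet.univ, fun n => ?_⟩
  simpa using measurableSet_coordSAK_hitTK_le hRmeas n

theorem measurable_hitTK (hRmeas : ∀ s ∈ S, MeasurableSet (Rs s)) :
    Measurable (hitTK S sim Rs) :=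
  ENat.measurable_of_measurableSet_le fun n =>
    iSup₂_le (fun k _ => (measurable_pi_apply k).comap_le) _
      (measurableSet_coordSAK_hitTK_le hRmeas n)

theorem measurable_at_hitTK {β : Type*} [MeasurableSpace β] {f : ℕ → (ℕ → I × ℝ) → β}
    (hf : ∀ n, Measurable (f n)) (hRmeas : ∀ s ∈ S, MeasurableSet (Rs s)) :
    Measurable fun w => f (hitTK S sim Rs w).toNat w := by
  have hjoint : Measurable fun p : (ℕ → I × ℝ) × ℕ => f p.2 p.1 :=
    measurable_from_prod_countable_left hf
  exact hjoint.comp (measurable_id.prodMk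
    ((Measurable.of_discrete (f := ENat.toNat)).comp (measurable_hitTK hRmeas)))

theorem measurable_shiftK_hitTK (hRmeas : ∀ s ∈ S, MeasurableSet (Rs s)) :
    Measurable fun w => shiftK (hitTK S sim Rs w).toNat w :=
  measurable_at_hitTK measurable_shiftK hRmeas

end Measurability

section Cycle

variable (S : Finset I) (sim : I → I → Prop) (Rs : I → Set ℝ)

noncomputable def cycleMeasureK (P : Measure (ℕ → I × ℝ)) : Measure (ℕ → I × ℝ) :=
  Measure.sum fun n : ℕ => (P.restrict {w | (n : ℕ∞) < hitTK S sim Rs w}).map (shiftK n)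

noncomputable def postHitK (P : Measure (ℕ → I × ℝ)) : Measure (ℕ → I × ℝ) :=
  (P.restrict {w | hitTK S sim Rs w < ⊤}).map fun w => shiftK (hitTK S sim Rs w).toNat w

theorem lawPK_eq_sum (π : I → ℝ≥0) (Pd : I → Measure (ℕ → I × ℝ)) :
    lawPK S sim Rs π Pd = ∑ s ∈ S, (π s : ℝ≥0∞) • cycleMeasureK S sim Rs (Pd s) :=
  rfl

variable {S sim Rs}

theorem cycleMeasureK_apply (P : Measure (ℕ → I × ℝ)) {B : Set (ℕ → I × ℝ)}
    (hB : MeasurableSet B) :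
    cycleMeasureK S sim Rs P B =
      ∑' n : ℕ, P ({w | (n : ℕ∞) < hitTK S sim Rs w} ∩ shiftK n ⁻¹' B) := by
  rw [cycleMeasureK, Measure.sum_apply _ hB]
  refine tsum_congr fun n => ?_
  rw [Measure.map_apply (measurable_shiftK n) hB,
    Measure.restrict_apply (hB.preimage (measurable_shiftK n)), Set.inter_comm]

variable [Countable I] [MeasurableSingletonClass I]

theorem postHitK_apply (hRmeas : ∀ s ∈ S, MeasurableSet (Rs s)) (P : Measure (ℕ → I × ℝ))
    {B : Set (ℕ → I × ℝ)} (hB : MeasurableSet B) :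
    postHitK S sim Rs P B = ∑' n : ℕ, P ({w | hitTK S sim Rs w = n} ∩ shiftK n ⁻¹' B) := by
  rw [postHitK, Measure.map_apply (measurable_shiftK_hitTK hRmeas) hB,
    Measure.restrict_apply (hB.preimage (measurable_shiftK_hitTK hRmeas)), ← measure_iUnion]
  · congr 1
    ext w
    simp only [Set.mem_inter_iff, Set.mem_preimage, Set.mem_ofPred_eq, Set.mem_iUnion]
    constructor
    · rintro ⟨hwB, hT⟩
      exact ⟨_, (ENat.natCast_toNat hT.ne).symm, hwB⟩
    · rintro ⟨n, hT, hwB⟩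
      rw [hT, ENat.toNat_natCast]
      exact ⟨hwB, ENat.natCast_lt_top n⟩
  · intro m n hmn
    exact Set.disjoint_left.2 fun w hm hn => hmn (Nat.cast_injective (hm.1.symm.trans hn.1))
  · exact fun n => (measurable_hitTK hRmeas (measurableSet_singleton (n : ℕ∞))).inter
      (hB.preimage (measurable_shiftK n))

theorem cycleMeasureK_univ (hRmeas : ∀ s ∈ S, MeasurableSet (Rs s)) (P : Measure (ℕ → I × ℝ)) :
    cycleMeasureK S sim Rs P Set.univ = hitETK S sim Rs P := by
  have hlt : ∀ n : ℕ, MeasurableSet {w | (n : ℕ∞) < hitTK S sim Rs w} := fun n =>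
    measurable_hitTK hRmeas (MeasurableSet.of_discrete (s := Set.Ioi (n : ℕ∞)))
  simp only [cycleMeasureK_apply P MeasurableSet.univ, Set.preimage_univ, Set.inter_univ, hitETK,
    ← ENat.tsum_ite_lt]
  rw [lintegral_tsum fun n => (measurable_const.ite (hlt n) measurable_const).aemeasurable]
  refine tsum_congr fun n => ?_
  rw [← lintegral_indicator_one (hlt n)]
  simp only [Set.indicator_apply, Set.mem_ofPred_eq, Pi.one_apply]

theorem cycleMeasureK_map_shiftK_add (hRmeas : ∀ s ∈ S, MeasurableSet (Rs s))
    (P : Measure (ℕ → I × ℝ)) :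
    (cycleMeasureK S sim Rs P).map (shiftK 1) + P =
      cycleMeasureK S sim Rs P + postHitK S sim Rs P := by
  ext B hB
  have hpre : ∀ n : ℕ, shiftK n ⁻¹' (shiftK 1 ⁻¹' B) = shiftK (n + 1) ⁻¹' B := fun n => by
    ext w
    simp [shiftK_shiftK]
  simp only [Measure.add_apply, Measure.map_apply (measurable_shiftK 1) hB,
    cycleMeasureK_apply P hB, cycleMeasureK_apply P (hB.preimage (measurable_shiftK 1)),
    postHitK_apply hRmeas P hB, hpre]
  set a : ℕ → ℝ≥0∞ := fun n => P ({w | (n : ℕ∞) < hitTK S sim Rs w} ∩ shiftK n ⁻¹' B)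
  set e : ℕ → ℝ≥0∞ := fun n => P ({w | hitTK S sim Rs w = n} ∩ shiftK n ⁻¹' B)
  have hsplit : ∀ n : ℕ,
      P ({w | (n : ℕ∞) < hitTK S sim Rs w} ∩ shiftK (n + 1) ⁻¹' B) = a (n + 1) + e (n + 1) :=
    fun n => measure_natCast_lt_inter_eq_add P (measurable_hitTK hRmeas)
      (hB.preimage (measurable_shiftK _)) n
  have ha0 : a 0 = P B := by simp [a, hitTK_pos, shiftK_zero]
  have he0 : e 0 = 0 := by simp [e, fun w => (hitTK_pos (S := S) (sim := sim) (Rs := Rs) w).ne']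
  simp only [hsplit]
  rw [ENNReal.tsum_add, tsum_eq_zero_add' ENNReal.summable (f := a),
    tsum_eq_zero_add' ENNReal.summable (f := e), ha0, he0]
  ring

end Cycle

section Regeneration

variable {S : Finset I} {sim : I → I → Prop} {Rs : I → Set ℝ}
variable [Fintype I] [MeasurableSingletonClass I]

theorem setIntegral_exitState_eq_sum (hRmeas : ∀ s ∈ S, MeasurableSet (Rs s))
    (P : Measure (ℕ → I × ℝ)) [IsFiniteMeasure P] (f : I → ℝ) :
    ∫ w in {w | hitTK S sim Rs w < ⊤}, f (w (hitTK S sim Rs w).toNat).1 ∂P =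
      ∑ s ∈ S, P.real {w | hitTK S sim Rs w < ⊤ ∧ (w (hitTK S sim Rs w).toNat).1 = s} * f s := by
  have hX : Measurable fun w : ℕ → I × ℝ => (w (hitTK S sim Rs w).toNat).1 :=
    measurable_at_hitTK (f := fun n w => (w n).1)
      (fun n => measurable_fst.comp (measurable_pi_apply n)) hRmeas
  have hfin : MeasurableSet {w | hitTK S sim Rs w < ⊤} :=
    measurable_hitTK hRmeas (MeasurableSet.of_discrete (s := Set.Iio ⊤))
  have hlaw : ∀ s, ((P.restrict {w | hitTK S sim Rs w < ⊤}).map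
      fun w => (w (hitTK S sim Rs w).toNat).1).real {s} =
        P.real {w | hitTK S sim Rs w < ⊤ ∧ (w (hitTK S sim Rs w).toNat).1 = s} := by
    intro s
    rw [map_measureReal_apply hX (measurableSet_singleton s),
      measureReal_restrict_apply (hX (measurableSet_singleton s)), Set.inter_comm]
    rfl
  rw [← integral_map hX.aemeasurable Measurable.of_discrete.aestronglyMeasurable,
    integral_fintype .of_finite, ← Finset.sum_subset S.subset_univ]
  · simp_rw [hlaw, smul_eq_mul]
  · intro s _ hs
    suffices {w | hitTK S sim Rs w < ⊤ ∧ (w (hitTK S sim Rs w).toNat).1 = s} = ∅ by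
      simp [hlaw, this]
    exact Set.eq_empty_of_forall_notMem fun w ⟨hT, hXs⟩ =>
      hs (hXs ▸ exitState_mem_of_hitTK_lt_top hT)

theorem postHitK_eq_sum_of_regenK (hRmeas : ∀ s ∈ S, MeasurableSet (Rs s))
    {P : Measure (ℕ → I × ℝ)} [IsFiniteMeasure P] {Ps : I → Measure (ℕ → I × ℝ)}
    (hPs : ∀ s ∈ S, IsFiniteMeasure (Ps s)) (hregen : RegenK S (hitTK S sim Rs) Ps P) :
    postHitK S sim Rs P =
      ∑ s ∈ S, P {w | hitTK S sim Rs w < ⊤ ∧ (w (hitTK S sim Rs w).toNat).1 = s} • Ps s := by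
  ext B hB
  rw [postHitK]
  have hbdd : ∃ M, ∀ y, |B.indicator (1 : (ℕ → I × ℝ) → ℝ) y| ≤ M :=
    ⟨1, fun y => by by_cases hy : y ∈ B <;> simp [hy]⟩
  have hregB := hregen.2 _ (measurable_one.indicator hB) hbdd _ (univ_mem_stopSetsK hRmeas)
  rw [Set.univ_inter, ← integral_map (measurable_shiftK_hitTK hRmeas).aemeasurable
      (measurable_one.indicator hB).aestronglyMeasurable, integral_indicator_one hB] at hregB
  simp_rw [integral_indicator_one hB] at hregB
  rw [setIntegral_exitState_eq_sum hRmeas P fun s => (Ps s).real B] at hregB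
  have hterm_ne_top : ∀ s ∈ S,
      P {w | hitTK S sim Rs w < ⊤ ∧ (w (hitTK S sim Rs w).toNat).1 = s} * Ps s B ≠ ⊤ :=
    fun s hs => ENNReal.mul_ne_top (measure_ne_top _ _) (haveI := hPs s hs; measure_ne_top _ _)
  simp only [Measure.finsetSum_apply, Measure.smul_apply, smul_eq_mul]
  rw [← ENNReal.toReal_eq_toReal_iff' (measure_ne_top _ _)
    (ENNReal.sum_ne_top.2 hterm_ne_top), ENNReal.toReal_sum hterm_ne_top]
  simpa [measureReal_def] using hregB

theorem sum_smul_postHitK_eq {Pd : I → Measure (ℕ → I × ℝ)}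
    (hRmeas : ∀ s ∈ S, MeasurableSet (Rs s)) (hdprob : ∀ s ∈ S, IsProbabilityMeasure (Pd s))
    (hregen : ∀ s ∈ S, RegenK S (hitTK S sim Rs) Pd (Pd s)) (π : I → ℝ≥0) :
    ∑ s ∈ S, (π s : ℝ≥0∞) • postHitK S sim Rs (Pd s) =
      ∑ s' ∈ S, (∑ s ∈ S, (π s : ℝ≥0∞) * qmatK S sim Rs Pd s s') • Pd s' := by
  have hPd : ∀ s ∈ S, IsFiniteMeasure (Pd s) := fun s hs => have := hdprob s hs; inferInstance
  calc _ = ∑ s ∈ S, (π s : ℝ≥0∞) • ∑ s' ∈ S, qmatK S sim Rs Pd s s' • Pd s' :=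
        Finset.sum_congr rfl fun s hs => by
          have := hPd s hs
          rw [postHitK_eq_sum_of_regenK hRmeas hPd (hregen s hs)]
          rfl
    _ = _ := by
        simp_rw [Finset.smul_sum, smul_smul, Finset.sum_smul]
        exact Finset.sum_comm

end Regeneration

section Stationarity

variable {S : Finset I} {sim : I → I → Prop} {Rs : I → Set ℝ}

theorem measure_fst_zero_eq_one {P : Measure (ℕ → I × ℝ)} {s : I} {R : Set ℝ}
    (hR0 : volume R ≠ 0) (hRtop : volume R ≠ ⊤)
    (hunif : ∀ R' : Set ℝ, MeasurableSet R' →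
      P {w | (w 0).1 = s ∧ (w 0).2 ∈ R'} = volume (R' ∩ R) / volume R) :
    P {w | (w 0).1 = s} = 1 := by
  simpa [ENNReal.div_self hR0 hRtop] using hunif Set.univ MeasurableSet.univ

theorem measure_fst_zero_eq_zero [MeasurableSingletonClass I] {P : Measure (ℕ → I × ℝ)}
    [IsProbabilityMeasure P] {s s' : I} (h : P {w | (w 0).1 = s} = 1) (hne : s ≠ s') :
    P {w | (w 0).1 = s'} = 0 := by
  have hmeas : MeasurableSet {w : ℕ → I × ℝ | (w 0).1 = s} :=
    (measurable_fst.comp (measurable_pi_apply 0)) (measurableSet_singleton s)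
  exact measure_mono_null (fun w (hw : (w 0).1 = s') (hs : (w 0).1 = s) => hne (hs.symm.trans hw))
    ((prob_compl_eq_zero_iff hmeas).2 h)

variable [Countable I] [MeasurableSingletonClass I]

theorem lawPK_univ (hRmeas : ∀ s ∈ S, MeasurableSet (Rs s)) (π : I → ℝ≥0)
    (Pd : I → Measure (ℕ → I × ℝ)) :
    lawPK S sim Rs π Pd Set.univ = ∑ s ∈ S, (π s : ℝ≥0∞) * hitETK S sim Rs (Pd s) := by
  rw [lawPK_eq_sum, Measure.finsetSum_apply]
  simp only [Measure.smul_apply, smul_eq_mul, cycleMeasureK_univ hRmeas]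

theorem lawPK_map_shiftK_add (hRmeas : ∀ s ∈ S, MeasurableSet (Rs s)) (π : I → ℝ≥0)
    (Pd : I → Measure (ℕ → I × ℝ)) :
    (lawPK S sim Rs π Pd).map (shiftK 1) + ∑ s ∈ S, (π s : ℝ≥0∞) • Pd s =
      lawPK S sim Rs π Pd + ∑ s ∈ S, (π s : ℝ≥0∞) • postHitK S sim Rs (Pd s) := by
  rw [lawPK_eq_sum, Measure.map_finset_sum (measurable_shiftK 1).aemeasurable]
  simp only [Measure.map_smul, ← Finset.sum_add_distrib, ← smul_add,
    cycleMeasureK_map_shiftK_add hRmeas]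

end Stationarity

theorem stmt_17_general [Fintype I] [MeasurableSingletonClass I]
    (S : Finset I)
    (sim : I → I → Prop)
    (Rs : I → Set ℝ) (hRmeas : ∀ s ∈ S, MeasurableSet (Rs s))
    (hRsub : ∀ s ∈ S, Rs s ⊆ Set.Icc (0 : ℝ) 1)
    (hRpos : ∀ s ∈ S, 0 < volume (Rs s))
    (Pd : I → Measure (ℕ → I × ℝ)) (hdprob : ∀ s ∈ S, IsProbabilityMeasure (Pd s))
    (hunif : ∀ s ∈ S, ∀ R' : Set ℝ, MeasurableSet R' →
      Pd s {w | (w 0).1 = s ∧ (w 0).2 ∈ R'} = volume (R' ∩ Rs s) / volume (Rs s))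
    (hregen : ∀ s ∈ S, RegenK S (hitTK S sim Rs) Pd (Pd s))
    (π : I → ℝ≥0)
    (hnorm : ∑ s ∈ S, (π s : ℝ≥0∞) * hitETK S sim Rs (Pd s) = 1) :
    (lawPK S sim Rs π Pd).map (shiftK 1) = lawPK S sim Rs π Pd ↔
      ∀ s ∈ S, (π s : ℝ≥0∞) = ∑ s' ∈ S, (π s' : ℝ≥0∞) * qmatK S sim Rs Pd s' s := by
  have hstart : ∀ s ∈ S, Pd s {w | (w 0).1 = s} = 1 := fun s hs =>
    measure_fst_zero_eq_one (hRpos s hs).ne'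
      ((measure_mono (hRsub s hs)).trans_lt (by simp)).ne (hunif s hs)
  have hcycle := lawPK_map_shiftK_add (sim := sim) hRmeas π Pd
  rw [sum_smul_postHitK_eq hRmeas hdprob hregen π] at hcycle
  have : IsProbabilityMeasure (lawPK S sim Rs π Pd) := ⟨(lawPK_univ hRmeas π Pd).trans hnorm⟩
  have hPd : ∀ s ∈ S, IsFiniteMeasure (Pd s) := fun s hs => have := hdprob s hs; inferInstance
  have := Measure.isFiniteMeasure_finsetSum_smul hPd π
  rw [Measure.map_eq_self_iff_of_add_eq hcycle, Measure.finsetSum_smul_eq_finsetSum_smul_iff hstart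
    fun s hs s' _ hne => have := hdprob s hs; measure_fst_zero_eq_zero (hstart s hs) hne]

/-- If each `P*†_s` starts at `s` with `Z_0` uniform on `R_s`, reaches a different class in an
a.s. finite time with finite mean, and regenerates at `𝒯`, and if `π† > 0` is normalized by
`∑ π†_s E*†_s(𝒯) = 1`, then the probability measure `ℙ*†` is shift-stationary iff `π†` is
invariant for the matrix `Q† = (P*†_s(X_𝒯 = s'))`. -/
theorem stmt_17 [Fintype I] [MeasurableSingletonClass I]
    (S : Finset I) (hS : S.Nonempty) (hSc : ∃ i : I, i ∉ S)
    (sim : I → I → Prop) (hsim : Equivalence sim)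
    (Rs : I → Set ℝ) (hRmeas : ∀ s ∈ S, MeasurableSet (Rs s))
    (hRsub : ∀ s ∈ S, Rs s ⊆ Set.Icc (0 : ℝ) 1)
    (hRpos : ∀ s ∈ S, 0 < volume (Rs s))
    (Pd : I → Measure (ℕ → I × ℝ)) (hdprob : ∀ s ∈ S, IsProbabilityMeasure (Pd s))
    (hunif : ∀ s ∈ S, ∀ R' : Set ℝ, MeasurableSet R' →
      Pd s {w | (w 0).1 = s ∧ (w 0).2 ∈ R'} = volume (R' ∩ Rs s) / volume (Rs s))
    (hTKfin : ∀ s ∈ S, Pd s {w | hitTK S sim Rs w < ⊤} = 1)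
    (hETfin : ∀ s ∈ S, hitETK S sim Rs (Pd s) < ⊤)
    (hregen : ∀ s ∈ S, RegenK S (hitTK S sim Rs) Pd (Pd s))
    (π : I → ℝ≥0) (hπ : ∀ s ∈ S, 0 < π s)
    (hnorm : ∑ s ∈ S, (π s : ℝ≥0∞) * hitETK S sim Rs (Pd s) = 1) :
    (lawPK S sim Rs π Pd).map (shiftK 1) = lawPK S sim Rs π Pd ↔
      ∀ s ∈ S, (π s : ℝ≥0∞) = ∑ s' ∈ S, (π s' : ℝ≥0∞) * qmatK S sim Rs Pd s' s :=
  stmt_17_general S sim Rs hRmeas hRsub hRpos Pd hdprob hunif hregen π hnorm
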